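/- arXiv:1903.06363 — 2 statements merged into one kernel-verified Lean document; each statement's English description precedes it below -/
import Mathlib

section
/- Let M be a module over the Hecke algebra H_n(q), and for 1 ≤ i ≤ n-1 set U_i = Ker((T_i - q) on M) or U_i = Im((T_i + 1) on M) (one fixed choice for all i). Form the complex K_•(M;(U_i)) with K_i = Υ_i/(Υ_i ∩ Σ_i), where Υ_i = ∩_{j<i} U_j and Σ_i = Σ_{j>i} U_j (conventions Υ_0 = Υ_1 = M, Σ_{n-1} = Σ_n = 0), differentials induced by the inclusions Υ_i ⊆ Υ_{i-1} and Σ_i ⊆ Σ_{i-1}. If the q-integer [n]_q = 1 + q + ... + q^{n-1} is nonzero in k, then this complex is exact. -/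
noncomputable section

variable {k : Type} [Field k] {N : ℕ}

/-- A family of operators `T i` on `M` makes `M` a left module over the Hecke
algebra `H_{N+1}(q)` of type `A_N` (generators `T_1, …, T_N` indexed by
`Fin N`). -/
def IsHeckeRep {M : Type} [AddCommGroup M] [Module k M] (q : k)
    (T : Fin N → Module.End k M) : Prop :=
  (∀ i j : Fin N, ((i : ℕ) + 1 = j ∨ (j : ℕ) + 1 = i) →
      T i * T j * T i = T j * T i * T j) ∧
  (∀ i j : Fin N, ((i : ℕ) + 1 < j ∨ (j : ℕ) + 1 < i) → T i * T j = T j * T i) ∧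
  (∀ i : Fin N, (T i - q • 1) * (T i + 1) = 0)

/-- `Υ_p = ⋂_{j < p} U_j` (1-based indexing of the `U`'s as `U_{j+1}`,
`j : Fin N`), with `Υ_0 = Υ_1 = M`. -/
def Ups {M : Type} [AddCommGroup M] [Module k M]
    (U : Fin N → Submodule k M) (p : ℕ) : Submodule k M :=
  ⨅ (j : Fin N) (_ : (j : ℕ) + 1 < p), U j

/-- `Σ_p = Σ_{j > p} U_j`, with `Σ_N = Σ_{N+1} = 0`. -/
def Sig {M : Type} [AddCommGroup M] [Module k M]
    (U : Fin N → Submodule k M) (p : ℕ) : Submodule k M :=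
  ⨆ (j : Fin N) (_ : p < (j : ℕ) + 1), U j

set_option linter.unusedSectionVars false

namespace HCX

variable {M : Type} [AddCommGroup M] [Module k M]

/-- `T'` extends the family `T` to natural-number indices by `1`. -/
def T' (T : Fin N → Module.End k M) (j : ℕ) : Module.End k M :=
  if h : j < N then T ⟨j, h⟩ else 1

variable (q : k) (T : Fin N → Module.End k M)

lemma T'_eq {j : ℕ} (h : j < N) : T' T j = T ⟨j, h⟩ := dif_pos h

section basic
variable (hT : IsHeckeRep q T)
include hT

lemma braid' {j : ℕ} (h : j + 1 < N) :
    T' T j * T' T (j+1) * T' T j = T' T (j+1) * T' T j * T' T (j+1) := by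
  rw [T'_eq T (by omega), T'_eq T h]
  exact hT.1 ⟨j, by omega⟩ ⟨j+1, h⟩ (Or.inl rfl)

lemma comm' {a b : ℕ} (h : a + 2 ≤ b) : T' T a * T' T b = T' T b * T' T a := by
  by_cases hb : b < N
  · rw [T'_eq T (by omega), T'_eq T hb]
    exact hT.2.1 ⟨a, by omega⟩ ⟨b, hb⟩ (Or.inl (by simp; omega))
  · rw [show T' T b = 1 from dif_neg hb, mul_one, one_mul]

lemma quad' {j : ℕ} (h : j < N) :
    T' T j * T' T j = (q - 1) • T' T j + q • 1 := by
  have h0 := hT.2.2 ⟨j, h⟩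
  rw [T'_eq T h]
  set t := T ⟨j, h⟩
  have e1 : t * t + t - q • t - q • 1 = 0 := by
    rw [← h0, sub_mul, mul_add, mul_add, mul_one, smul_mul_assoc, one_mul]; abel
  have e2 : t * t = (t * t + t - q • t - q • 1) + (q • t + q • 1 - t) := by abel
  rw [e2, e1, sub_smul, one_smul]; abel

/-- quadratic relation in factored form, with `q•1` on the left. -/
lemma quadfac {j : ℕ} (h : j < N) :
    (T' T j - q • 1) * (T' T j + 1) = 0 := by
  rw [T'_eq T h]; exact hT.2.2 ⟨j, h⟩

end basic

/-- `X i = Σ_{m=0}^{i} T_{i-m}⋯T_{i-1}` (increasing strings ending at `T_{i-1}`). -/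
def X (T : Fin N → Module.End k M) : ℕ → Module.End k M
  | 0 => 1
  | (i+1) => 1 + X T i * T' T i

/-- `Ybar d = Y_{N-d}`. -/
def Ybar (q : k) (T : Fin N → Module.End k M) : ℕ → Module.End k M
  | 0 => 1
  | (d+1) => q^(d+1) • 1 - T' T (N - (d+1)) * Ybar q T d

def Y (q : k) (T : Fin N → Module.End k M) (i : ℕ) : Module.End k M :=
  Ybar q T (N - i)

lemma Y_ge {i : ℕ} (h : N ≤ i) : Y q T i = 1 := by
  unfold Y; rw [show N - i = 0 by omega]; rfl

lemma Y_rec {i : ℕ} (h : i < N) :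
    Y q T i = q^(N-i) • 1 - T' T i * Y q T (i+1) := by
  unfold Y
  rw [show N - i = (N - (i+1)) + 1 by omega, Ybar,
    show N - (N-(i+1)+1) = i by omega, show N-(i+1)+1 = N - i by omega]

variable (hT : IsHeckeRep q T)
include hT

lemma commX {i l : ℕ} (h : i + 1 ≤ l) : T' T l * X T i = X T i * T' T l := by
  induction i with
  | zero => simp [X]
  | succ i ih =>
      rw [X, mul_add, add_mul, mul_one, one_mul, ← mul_assoc,
        ih (by omega), mul_assoc, ← comm' q T hT (by omega : i + 2 ≤ l), ← mul_assoc]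

lemma commYbar {a d : ℕ} (h : a + 2 ≤ N - d) :
    T' T a * Ybar q T d = Ybar q T d * T' T a := by
  induction d with
  | zero => simp [Ybar]
  | succ d ih =>
      rw [Ybar, mul_sub, sub_mul, mul_smul_comm, smul_mul_assoc, mul_one, one_mul,
        ← mul_assoc, comm' q T hT (by omega : a + 2 ≤ N - (d+1)), mul_assoc,
        ih (by omega), ← mul_assoc]

lemma commY {a i : ℕ} (h : a + 2 ≤ i) : T' T a * Y q T i = Y q T i * T' T a := by
  by_cases hi : i ≤ N
  · exact commYbar q T hT (by omega)
  · rw [Y_ge q T (by omega)]; simp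
end HCX

namespace HCX
variable {M : Type} [AddCommGroup M] [Module k M]
variable (q : k) (T : Fin N → Module.End k M)

/-- If `C` commutes with `A`, it commutes with `A - q•1`. -/
lemma censub {A C : Module.End k M} (h : C * A = A * C) :
    (A - q • 1) * C = C * (A - q • 1) := by
  rw [sub_mul, mul_sub, h, smul_mul_assoc, mul_smul_comm, one_mul, mul_one]

lemma cenadd {A C : Module.End k M} (h : C * A = A * C) :
    (A + 1) * C = C * (A + 1) := by
  rw [add_mul, mul_add, h, one_mul, mul_one]

variable (hT : IsHeckeRep q T)
include hT

lemma kerCert {j i : ℕ} (hji : j + 1 ≤ i) (hiN : i ≤ N) :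
    ∃ A B : Module.End k M,
      (T' T j - q • 1) * X T i
        = A * (T' T j - q • 1) + B * (T' T (j-1) - q • 1)
      ∧ (j + 1 = i → A = 0) ∧ (j = 0 → B = 0) := by
  have hjN : j < N := by omega
  have key : (T' T j - q • 1) * (1 + T' T j) = 0 := by
    have := quadfac q T hT hjN
    rw [show (1 : Module.End k M) + T' T j = T' T j + 1 by abel]; exact this
  have base1 : (T' T j - q • 1) * X T (j+1)
      = ((X T j - 1) * T' T j) * (T' T (j-1) - q • 1) := by
    rcases Nat.eq_zero_or_eq_succ_pred j with hj0 | hj1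
    · subst hj0
      show (T' T 0 - q • 1) * (1 + X T 0 * T' T 0)
        = ((X T 0 - 1) * T' T 0) * (T' T (0-1) - q • 1)
      rw [show (X T 0 : Module.End k M) = 1 from rfl, one_mul, sub_self, zero_mul, zero_mul]
      exact key
    · set j' := j - 1 with hj'
      have hjj : j = j' + 1 := hj1
      have hb : j' + 1 < N := by omega
      have braidj : T' T j * T' T j' * T' T j = T' T j' * T' T j * T' T j' := by
        have := braid' q T hT hb; rw [hjj]; exact this.symm
      have commXj : X T j' * T' T j = T' T j * X T j' :=
        (commX q T hT (by omega : j' + 1 ≤ j)).symm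
      have expand : X T (j+1) = (1 + T' T j) + X T j' * (T' T j' * T' T j) := by
        show (1 : Module.End k M) + X T j * T' T j = _
        rw [show X T j = 1 + X T j' * T' T j' from by rw [hjj]; try rfl, add_mul, one_mul,
          mul_assoc]; abel
      have c2 : (T' T j - q • 1) * (T' T j' * T' T j)
          = (T' T j' * T' T j) * (T' T j' - q • 1) := by
        simp only [sub_mul, mul_sub, smul_mul_assoc, mul_smul_comm, one_mul, mul_one]
        congr 1
      rw [expand, mul_add, key, zero_add, ← mul_assoc, censub q commXj, mul_assoc,
        c2, ← mul_assoc, ← mul_assoc]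
      congr 2
      rw [show X T j = 1 + X T j' * T' T j' from by rw [hjj]; try rfl, add_sub_cancel_left]
  obtain ⟨d, rfl⟩ : ∃ d, i = j + 1 + d := ⟨i - (j+1), by omega⟩
  clear hji
  induction d with
  | zero =>
      exact ⟨0, (X T j - 1) * T' T j, by rw [zero_mul, zero_add]; exact base1,
        fun _ => rfl, fun hj0 => by
          subst hj0
          rw [show X T 0 - 1 = 0 from sub_self 1, zero_mul]⟩
  | succ d ih =>
      have hstep : X T (j+1+(d+1)) = 1 + X T (j+1+d) * T' T (j+1+d) := rfl
      rcases Nat.eq_zero_or_pos d with hd0 | hd1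
      · -- base 2 : i = j + 2
        subst hd0
        simp only [Nat.add_zero] at hstep ⊢
        rcases Nat.eq_zero_or_eq_succ_pred j with hj0 | hj1
        · -- j = 0 : B-part vanishes
          subst hj0
          refine ⟨1, 0, ?_, by omega, fun _ => rfl⟩
          rw [hstep, mul_add, mul_one, ← mul_assoc, base1,
            show X T 0 - 1 = 0 from sub_self 1]
          simp
        · have hcomm : (T' T (j-1) - q • 1) * T' T (j+1)
              = T' T (j+1) * (T' T (j-1) - q • 1) :=
            censub q (comm' q T hT (by omega : (j-1) + 2 ≤ j + 1)).symm
          refine ⟨1, ((X T j - 1) * T' T j) * T' T (j+1), ?_, by omega, fun hj0 => by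
            subst hj0
            rw [show X T 0 - 1 = 0 from sub_self 1, zero_mul, zero_mul]⟩
          rw [hstep, mul_add, mul_one, ← mul_assoc, base1, mul_assoc, hcomm, one_mul,
            ← mul_assoc]
      · obtain ⟨A, B, hAB, hA0, hB0⟩ := ih (by omega)
        refine ⟨1 + A * T' T (j+1+d), B * T' T (j+1+d), ?_, fun h => by omega, fun hj0 => by
          rw [hB0 hj0, zero_mul]⟩
        have comm1 : (T' T j - q • 1) * T' T (j+1+d)
            = T' T (j+1+d) * (T' T j - q • 1) :=
          censub q (comm' q T hT (by omega : j + 2 ≤ j+1+d)).symm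
        have comm2 : (T' T (j-1) - q • 1) * T' T (j+1+d)
            = T' T (j+1+d) * (T' T (j-1) - q • 1) :=
          censub q (comm' q T hT (by omega : (j-1) + 2 ≤ j+1+d)).symm
        rw [hstep, mul_add, mul_one, ← mul_assoc, hAB, add_mul, add_mul, one_mul,
          mul_assoc A, comm1, mul_assoc B, comm2, ← mul_assoc A, ← mul_assoc B]
        abel

end HCX

namespace HCX
variable {M : Type} [AddCommGroup M] [Module k M]
variable (q : k) (T : Fin N → Module.End k M) (hT : IsHeckeRep q T)

lemma Xapp (i : ℕ) (z : M) : X T (i+1) z = z + X T i (T' T i z) := by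
  show ((1 : Module.End k M) + X T i * T' T i) z = _
  rw [LinearMap.add_apply, Module.End.one_apply, Module.End.mul_apply]

lemma addone_app (E : Module.End k M) (z : M) : (E + 1) z = E z + z := by
  rw [LinearMap.add_apply, Module.End.one_apply]

include hT

lemma braidfac {a : ℕ} (h : a + 1 < N) :
    T' T a * T' T (a+1) * (T' T a + 1)
      = (T' T (a+1) + 1) * (T' T a * T' T (a+1)) := by
  rw [mul_add, mul_one, add_mul, one_mul]
  congr 1
  exact braid' q T hT h

/-- commuting an `(E+1)`-form through an operator, element level -/
lemma swap_app {a : ℕ} (E : Module.End k M) (h : E * T' T a = T' T a * E) (z : M) :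
    E ((T' T a + 1) z) = (T' T a + 1) (E z) := by
  simpa only [Module.End.mul_apply] using (LinearMap.congr_fun (cenadd h) z).symm

lemma imCert : ∀ i, i ≤ N → ∀ j, j + 1 ≤ i → ∀ (w v₁ v₂ : M),
    (j + 2 ≤ i → w = (T' T j + 1) v₁) →
    (1 ≤ j → w = (T' T (j-1) + 1) v₂) →
    ∃ u, X T i w = (T' T j + 1) u := by
  intro i
  induction i with
  | zero => intro _ j hj; omega
  | succ i ih =>
      intro hiN j hj w v₁ v₂ hv₁ hv₂
      rcases Nat.lt_trichotomy (j+1) i with hlt | heq | hgt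
      · -- j + 2 ≤ i : use IH on T'_i w
        have h2 : j + 2 ≤ i := by omega
        have hw1 : w = (T' T j + 1) v₁ := hv₁ (by omega)
        have hv₁' : T' T i w = (T' T j + 1) (T' T i v₁) := by
          rw [hw1]
          exact swap_app q T hT _ (comm' q T hT h2).symm v₁
        obtain ⟨u', hu'⟩ := ih (by omega) j (by omega) (T' T i w) (T' T i v₁) (T' T i v₂)
          (fun _ => hv₁')
          (fun h1 => by
            rw [hv₂ h1]
            exact swap_app q T hT _ (comm' q T hT (by omega : (j-1) + 2 ≤ i)).symm v₂)
        refine ⟨v₁ + u', ?_⟩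
        rw [Xapp, hu', map_add (T' T j + 1) v₁ u', ← hw1]
      · -- j + 1 = i
        subst heq
        have hw1 : w = (T' T j + 1) v₁ := hv₁ (by omega)
        rcases Nat.eq_zero_or_eq_succ_pred j with hj0 | hj1
        · subst hj0
          refine ⟨v₁ + T' T 1 w, ?_⟩
          rw [Xapp, Xapp]
          rw [show ∀ z : M, X T 0 z = z from fun z => rfl,
            map_add (T' T 0 + 1) v₁ (T' T 1 w), ← hw1,
            addone_app (T' T 0) (T' T 1 w)]
          abel
        · set j'' := j - 1 with hj''def
          have hjj : j = j'' + 1 := hj1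
          have hw2 : w = (T' T j'' + 1) v₂ := hv₂ (by omega)
          have hbN : j'' + 1 < N := by omega
          have hz : T' T (j+1) w = (T' T j'' + 1) (T' T (j+1) v₂) := by
            rw [hw2]
            exact swap_app q T hT _ (comm' q T hT (by omega : j'' + 2 ≤ j + 1)).symm v₂
          have hfac : T' T j'' (T' T j (T' T (j+1) w))
              = (T' T j + 1) (T' T j'' (T' T j (T' T (j+1) v₂))) := by
            have e : T' T j'' * T' T j * (T' T j'' + 1)
                = (T' T j + 1) * (T' T j'' * T' T j) := by
              have := braidfac q T hT hbN
              rw [← hjj] at this; exact this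
            have happ := LinearMap.congr_fun e (T' T (j+1) v₂)
            simp only [Module.End.mul_apply] at happ
            rw [hz]; exact happ
          have hcX : X T j'' ((T' T j + 1) (T' T j'' (T' T j (T' T (j+1) v₂))))
              = (T' T j + 1) (X T j'' (T' T j'' (T' T j (T' T (j+1) v₂)))) := by
            have happ := (LinearMap.congr_fun
              (cenadd (commX q T hT (by omega : j'' + 1 ≤ j)).symm)
              (T' T j'' (T' T j (T' T (j+1) v₂)))).symm
            simpa only [Module.End.mul_apply] using happ
          refine ⟨v₁ + T' T (j+1) w + X T j'' (T' T j'' (T' T j (T' T (j+1) v₂))), ?_⟩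
          rw [Xapp, Xapp]
          rw [show X T j (T' T j (T' T (j+1) w))
              = T' T j (T' T (j+1) w) + X T j'' (T' T j'' (T' T j (T' T (j+1) w))) from by
            rw [hjj]; exact Xapp T j'' _]
          rw [hfac, hcX]
          rw [map_add (T' T j + 1) (v₁ + T' T (j+1) w)
              (X T j'' (T' T j'' (T' T j (T' T (j+1) v₂)))),
            map_add (T' T j + 1) v₁ (T' T (j+1) w), ← hw1,
            addone_app (T' T j) (T' T (j+1) w)]
          abel
      · -- j = i
        have hji : j = i := by omega
        subst hji
        rcases Nat.eq_zero_or_eq_succ_pred j with hj0 | hj1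
        · subst hj0
          refine ⟨w, ?_⟩
          rw [Xapp]
          show w + X T 0 (T' T 0 w) = _
          rw [show ∀ z : M, X T 0 z = z from fun z => rfl,
            addone_app (T' T 0) w]
          abel
        · set i'' := j - 1 with hi''def
          have hjj : j = i'' + 1 := hj1
          have hw2 : w = (T' T i'' + 1) v₂ := hv₂ (by omega)
          have hbN : i'' + 1 < N := by omega
          have hfac : T' T i'' (T' T j w)
              = (T' T j + 1) (T' T i'' (T' T j v₂)) := by
            have e : T' T i'' * T' T j * (T' T i'' + 1)
                = (T' T j + 1) * (T' T i'' * T' T j) := by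
              have := braidfac q T hT hbN
              rw [← hjj] at this; exact this
            have happ := LinearMap.congr_fun e v₂
            simp only [Module.End.mul_apply] at happ
            rw [hw2]; exact happ
          have hcX : X T i'' ((T' T j + 1) (T' T i'' (T' T j v₂)))
              = (T' T j + 1) (X T i'' (T' T i'' (T' T j v₂))) := by
            have happ := (LinearMap.congr_fun
              (cenadd (commX q T hT (by omega : i'' + 1 ≤ j)).symm)
              (T' T i'' (T' T j v₂))).symm
            simpa only [Module.End.mul_apply] using happ
          refine ⟨w + X T i'' (T' T i'' (T' T j v₂)), ?_⟩
          rw [Xapp]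
          rw [show X T j (T' T j w)
              = T' T j w + X T i'' (T' T i'' (T' T j w)) from by
            rw [hjj]; exact Xapp T i'' _]
          rw [hfac, hcX,
            map_add (T' T j + 1) w (X T i'' (T' T i'' (T' T j v₂))),
            addone_app (T' T j) w]
          abel

end HCX

namespace HCX
variable {M : Type} [AddCommGroup M] [Module k M]
variable (q : k) (T : Fin N → Module.End k M)

lemma Yapp {i : ℕ} (h : i < N) (z : M) :
    Y q T i z = q^(N-i) • z - T' T i (Y q T (i+1) z) := by
  rw [Y_rec q T h]
  rw [LinearMap.sub_apply, LinearMap.smul_apply, Module.End.one_apply, Module.End.mul_apply]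

variable (hT : IsHeckeRep q T)
include hT

/-- eigenvector transport through `Y i` for commuting indices. -/
lemma Yeig {a i : ℕ} (h : a + 2 ≤ i) {u : M} (hu : T' T a u = q • u) :
    T' T a (Y q T i u) = q • (Y q T i u) := by
  have e := LinearMap.congr_fun (commY q T hT h) u
  simp only [Module.End.mul_apply] at e
  rw [e, hu, map_smul]

lemma kerY (l : ℕ) (hl : l < N) :
    ∀ d i, i + d = l → ∀ u : M, T' T l u = q • u →
    ∃ a b : M, Y q T i u = a + b ∧ T' T l a = q • a ∧ T' T (l+1) b = q • b
      ∧ (i = l → a = 0) ∧ (l + 1 = N → b = 0) := by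
  intro d
  induction d using Nat.strong_induction_on with
  | _ d ihd =>
  intro i hi u hu
  rcases d with _ | d0
  · -- d = 0 : i = l
    have hil : i = l := by omega
    subst hil
    rcases Nat.lt_or_ge (i+1) N with hN | hN
    · -- i + 1 < N : Y_i u = T'_i (T'_{i+1} (Y_{i+2} u))
      set v := Y q T (i+2) u with hv
      have hveig : T' T i v = q • v := Yeig q T hT (by omega) hu
      have hexp : Y q T i u = T' T i (T' T (i+1) v) := by
        rw [Yapp q T hl, Yapp q T hN, map_sub, map_smul, hu,
          show N - i = (N - (i+1)) + 1 by omega, pow_succ]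
        rw [smul_smul, mul_comm]
        abel
      have hbeig : T' T (i+1) (T' T i (T' T (i+1) v)) = q • T' T i (T' T (i+1) v) := by
        have e := LinearMap.congr_fun (braid' q T hT hN) v
        simp only [Module.End.mul_apply] at e
        rw [← e, hveig, map_smul, map_smul]
      exact ⟨0, T' T i (T' T (i+1) v), by rw [hexp, zero_add], by rw [map_zero, smul_zero],
        hbeig, fun _ => rfl, fun h => by omega⟩
    · -- i + 1 = N : Y_i u = 0
      have hiN : i + 1 = N := by omega
      have hexp : Y q T i u = 0 := by
        rw [Yapp q T hl, Y_ge q T (by omega), show N - i = 1 by omega]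
        show q ^ 1 • u - T' T i ((1 : Module.End k M) u) = 0
        rw [Module.End.one_apply, hu, pow_one, sub_self]
      exact ⟨0, 0, by rw [hexp, add_zero], by rw [map_zero, smul_zero],
        by rw [map_zero, smul_zero], fun _ => rfl, fun _ => rfl⟩
  · -- d ≥ 1
    obtain ⟨a1, b1, hsum, ha1, hb1, hia, hbN⟩ :=
      ihd d0 (by omega) (i+1) (by omega) u hu
    have hiN : i < N := by omega
    have hexp : Y q T i u = q^(N-i) • u - T' T i a1 - T' T i b1 := by
      rw [Yapp q T hiN, hsum, map_add]; abel
    rcases d0 with _ | d1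
    · -- d = 1 : i + 1 = l, use a1 = 0
      rw [hia (by omega), map_zero] at hexp
      refine ⟨q^(N-i) • u, -(T' T i b1), by rw [hexp]; abel, ?_, ?_, fun h => by omega,
        fun h => by rw [hbN h, map_zero, neg_zero]⟩
      · rw [map_smul, hu, smul_smul, smul_smul, mul_comm]
      · rw [map_neg, smul_neg]
        congr 1
        have e := LinearMap.congr_fun (comm' q T hT (by omega : i + 2 ≤ l + 1)) b1
        simp only [Module.End.mul_apply] at e
        rw [← e, hb1, map_smul]
    · -- d ≥ 2 : i + 2 ≤ l
      refine ⟨q^(N-i) • u - T' T i a1, -(T' T i b1), by rw [hexp]; abel, ?_, ?_,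
        fun h => by omega, fun h => by rw [hbN h, map_zero, neg_zero]⟩
      · rw [map_sub, map_smul, hu, smul_sub, smul_smul, smul_smul, mul_comm]
        congr 1
        have e := LinearMap.congr_fun (comm' q T hT (by omega : i + 2 ≤ l)) a1
        simp only [Module.End.mul_apply] at e
        rw [← e, ha1, map_smul]
      · rw [map_neg, smul_neg]
        congr 1
        have e := LinearMap.congr_fun (comm' q T hT (by omega : i + 2 ≤ l + 1)) b1
        simp only [Module.End.mul_apply] at e
        rw [← e, hb1, map_smul]

lemma imY (l : ℕ) (hl : l < N) :
    ∀ d i, i + d = l → ∀ v : M,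
    ∃ a b : M, Y q T i ((T' T l + 1) v) = (T' T l + 1) a + (T' T (l+1) + 1) b
      ∧ (i = l → a = 0) ∧ (l + 1 = N → b = 0) := by
  intro d
  induction d using Nat.strong_induction_on with
  | _ d ihd =>
  intro i hi v
  rcases d with _ | d0
  · -- d = 0 : i = l
    have hil : i = l := by omega
    subst hil
    have hquadz : ∀ z : M, T' T i ((T' T i + 1) z) = q • ((T' T i + 1) z) := by
      intro z
      have e := LinearMap.congr_fun (quadfac q T hT hl) z
      simp only [Module.End.mul_apply, LinearMap.sub_apply, LinearMap.smul_apply,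
        Module.End.one_apply, LinearMap.zero_apply] at e
      exact sub_eq_zero.mp e
    rcases Nat.lt_or_ge (i+1) N with hN | hN
    · set z := Y q T (i+2) v with hz
      have hYcomm : Y q T (i+2) ((T' T i + 1) v) = (T' T i + 1) z := by
        have e := LinearMap.congr_fun (cenadd (commY q T hT (by omega : i + 2 ≤ i+2)).symm) v
        simp only [Module.End.mul_apply] at e
        exact e.symm
      have hexp : Y q T i ((T' T i + 1) v)
          = T' T i (T' T (i+1) ((T' T i + 1) z)) := by
        rw [Yapp q T hl, Yapp q T hN, map_sub, map_smul, hYcomm, hquadz,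
          show N - i = (N - (i+1)) + 1 by omega, pow_succ, smul_smul, mul_comm,
          ← smul_smul]
        abel
      -- T'_i (T'_{i+1} ((T'_i + 1) z)) = (T'_{i+1} + 1) (T'_i (T'_{i+1} z))
      have hfac : T' T i (T' T (i+1) ((T' T i + 1) z))
          = (T' T (i+1) + 1) (T' T i (T' T (i+1) z)) := by
        have e := LinearMap.congr_fun (braidfac q T hT hN) z
        simp only [Module.End.mul_apply] at e
        exact e
      refine ⟨0, T' T i (T' T (i+1) z), ?_, fun _ => rfl, fun h => by omega⟩
      rw [hexp, hfac, map_zero, zero_add]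
    · -- i + 1 = N
      have hexp : Y q T i ((T' T i + 1) v) = 0 := by
        rw [Yapp q T hl, Y_ge q T (by omega), show N - i = 1 by omega, pow_one]
        show q • ((T' T i + 1) v) - T' T i ((1 : Module.End k M) ((T' T i + 1) v)) = 0
        rw [Module.End.one_apply, hquadz, sub_self]
      exact ⟨0, 0, by rw [hexp, map_zero, map_zero, add_zero], fun _ => rfl, fun _ => rfl⟩
  · -- d ≥ 1
    obtain ⟨a1, b1, hsum, hia, hbN⟩ := ihd d0 (by omega) (i+1) (by omega) v
    have hiN : i < N := by omega
    have hexp : Y q T i ((T' T l + 1) v)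
        = q^(N-i) • ((T' T l + 1) v) - T' T i ((T' T l + 1) a1)
          - T' T i ((T' T (l+1) + 1) b1) := by
      rw [Yapp q T hiN, hsum, map_add]; abel
    have hcb : T' T i ((T' T (l+1) + 1) b1) = (T' T (l+1) + 1) (T' T i b1) :=
      swap_app q T hT (T' T i) (comm' q T hT (by omega : i + 2 ≤ l + 1)) b1
    rcases d0 with _ | d1
    · -- d = 1 : a1 = 0
      rw [hia (by omega), map_zero, map_zero] at hexp
      refine ⟨q^(N-i) • v, -(T' T i b1), ?_, fun h => by omega,
        fun h => by rw [hbN h, map_zero, neg_zero]⟩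
      rw [hexp, hcb, map_smul, map_neg]
      abel
    · -- d ≥ 2
      have hca : T' T i ((T' T l + 1) a1) = (T' T l + 1) (T' T i a1) :=
        swap_app q T hT (T' T i) (comm' q T hT (by omega : i + 2 ≤ l)) a1
      refine ⟨q^(N-i) • v - T' T i a1, -(T' T i b1), ?_, fun h => by omega,
        fun h => by rw [hbN h, map_zero, neg_zero]⟩
      rw [hexp, hca, hcb, map_sub, map_smul, map_neg]
      abel

end HCX

namespace HCX
variable {M : Type} [AddCommGroup M] [Module k M]
variable (q : k) (T : Fin N → Module.End k M)
variable (U : Fin N → Submodule k M)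

lemma mem_Ups {p : ℕ} {m : M} :
    m ∈ Ups U p ↔ ∀ j : Fin N, (j : ℕ) + 1 < p → m ∈ U j := by
  simp [Ups, Submodule.mem_iInf]

lemma Ups_le {p : ℕ} (j : Fin N) (h : (j : ℕ) + 1 < p) : Ups U p ≤ U j :=
  iInf₂_le j h

lemma Ups_antitone {p p' : ℕ} (h : p ≤ p') : Ups U p' ≤ Ups U p :=
  le_iInf₂ fun j hj => Ups_le U j (by omega)

lemma U_le_Sig {p : ℕ} (j : Fin N) (h : p < (j : ℕ) + 1) : U j ≤ Sig U p :=
  le_iSup₂ (f := fun (j : Fin N) (_ : p < (j : ℕ) + 1) => U j) j h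

lemma Sig_antitone {p p' : ℕ} (h : p ≤ p') : Sig U p' ≤ Sig U p :=
  iSup₂_le fun j hj => U_le_Sig U j (by omega)

variable (hT : IsHeckeRep q T)
include hT

def HU : Prop := (∀ i, U i = LinearMap.ker (T i - q • 1)) ∨
          (∀ i, U i = LinearMap.range (T i + 1))

lemma UImT (hU : HU q T U) (j : Fin N) (v : M) : (T j + 1) v ∈ U j := by
  rcases hU with h | h
  · rw [h j, LinearMap.mem_ker]
    have e := LinearMap.congr_fun (hT.2.2 j) v
    simpa only [Module.End.mul_apply, LinearMap.zero_apply] using e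
  · rw [h j]; exact ⟨v, rfl⟩

lemma UKer (hU : HU q T U) (j : Fin N) {u : M} (hu : u ∈ U j) : T j u = q • u := by
  rcases hU with h | h
  · rw [h j, LinearMap.mem_ker] at hu
    simp only [LinearMap.sub_apply, LinearMap.smul_apply, Module.End.one_apply] at hu
    exact sub_eq_zero.mp hu
  · rw [h j] at hu
    obtain ⟨v, rfl⟩ := hu
    have e := LinearMap.congr_fun (hT.2.2 j) v
    simp only [Module.End.mul_apply, LinearMap.zero_apply, LinearMap.sub_apply,
      LinearMap.smul_apply, Module.End.one_apply] at e
    exact sub_eq_zero.mp e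

omit hT in
lemma T'_fin (j : Fin N) : T' T (j : ℕ) = T j := by
  rw [T'_eq T j.2]

omit hT in
lemma eigUps (hT : IsHeckeRep q T) (hU : HU q T U) {p : ℕ} (hp : p ≤ N) {m : M}
    (hm : m ∈ Ups U p) : ∀ j, j + 1 < p → T' T j m = q • m := by
  intro j hj
  have hjN : j < N := by omega
  have hmem : m ∈ U ⟨j, hjN⟩ := (mem_Ups U).mp hm ⟨j, hjN⟩ hj
  rw [T'_eq T hjN]
  exact UKer q T U hT hU ⟨j, hjN⟩ hmem

lemma YUps (hU : HU q T U) {i : ℕ} {m : M} (hm : m ∈ Ups U i) :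
    Y q T i m ∈ Ups U i := by
  rw [mem_Ups] at hm ⊢
  intro j hj
  have hcomm : Y q T i * T' T (j : ℕ) = T' T (j : ℕ) * Y q T i :=
    (commY q T hT (by omega : (j : ℕ) + 2 ≤ i)).symm
  rcases hU with h | h
  · rw [h j, LinearMap.mem_ker]
    have heig : T' T (j : ℕ) m = q • m := by
      rw [T'_fin T]
      exact UKer q T U hT (Or.inl h) j (hm j hj)
    have e := Yeig q T hT (by omega : (j : ℕ) + 2 ≤ i) heig
    rw [T'_fin T] at e
    simp only [LinearMap.sub_apply, LinearMap.smul_apply, Module.End.one_apply]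
    rw [e, sub_self]
  · have hmem := hm j hj
    rw [h j] at hmem ⊢
    obtain ⟨v, rfl⟩ := hmem
    refine ⟨Y q T i v, ?_⟩
    have := swap_app q T hT (Y q T i) hcomm v
    rw [T'_fin T] at this
    exact this.symm

lemma XYUps (hU : HU q T U) {i : ℕ} (hi : i ≤ N) {m : M} (hm : m ∈ Ups U i) :
    X T i (Y q T i m) ∈ Ups U (i + 1) := by
  set w := Y q T i m with hwdef
  have hw : w ∈ Ups U i := YUps q T U hT hU hm
  rw [mem_Ups]
  intro j hj
  have hji : (j : ℕ) + 1 ≤ i := by omega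
  have heig : ∀ a, a + 1 < i → T' T a w = q • w :=
    eigUps q T U hT hU (by omega) hw
  rcases hU with h | h
  · -- kernel case
    obtain ⟨A, B, hid, hA0, hB0⟩ := kerCert q T hT hji hi
    have e := LinearMap.congr_fun hid w
    simp only [Module.End.mul_apply, LinearMap.add_apply, LinearMap.sub_apply,
      LinearMap.smul_apply, Module.End.one_apply] at e
    have hz : A (T' T (j : ℕ) w - q • w) + B (T' T ((j : ℕ) - 1) w - q • w) = 0 := by
      rcases Nat.lt_or_ge ((j : ℕ) + 1) i with hlt | hge
      · rw [heig (j : ℕ) (by omega), sub_self, map_zero, zero_add]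
        rcases Nat.eq_zero_or_pos (j : ℕ) with hj0 | hj1
        · rw [hj0, heig 0 (by omega), sub_self, map_zero]
        · rw [heig ((j : ℕ) - 1) (by omega), sub_self, map_zero]
      · have hji' : (j : ℕ) + 1 = i := by omega
        rw [hA0 hji', LinearMap.zero_apply, zero_add]
        rcases Nat.eq_zero_or_pos (j : ℕ) with hj0 | hj1
        · rw [hB0 hj0, LinearMap.zero_apply]
        · rw [heig ((j : ℕ) - 1) (by omega), sub_self, map_zero]
    rw [hz] at e
    rw [h j, LinearMap.mem_ker]
    simp only [LinearMap.sub_apply, LinearMap.smul_apply, Module.End.one_apply]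
    rw [← T'_fin T j]
    exact e
  · -- image case
    obtain ⟨v₁, hv₁⟩ : ∃ v₁, ((j : ℕ) + 2 ≤ i → w = (T' T (j : ℕ) + 1) v₁) := by
      by_cases hc : (j : ℕ) + 2 ≤ i
      · have hmem : w ∈ U j := (mem_Ups U).mp hw j (by omega)
        rw [h j] at hmem
        obtain ⟨v, hv⟩ := hmem
        exact ⟨v, fun _ => by rw [← hv, T'_fin T]⟩
      · exact ⟨0, fun hc' => absurd hc' hc⟩
    obtain ⟨v₂, hv₂⟩ : ∃ v₂, (1 ≤ (j : ℕ) → w = (T' T ((j : ℕ) - 1) + 1) v₂) := by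
      by_cases hc : 1 ≤ (j : ℕ)
      · have hjN' : (j : ℕ) - 1 < N := by omega
        have hmem : w ∈ U ⟨(j : ℕ) - 1, hjN'⟩ :=
          (mem_Ups U).mp hw ⟨(j : ℕ) - 1, hjN'⟩ (by simp; omega)
        rw [h ⟨(j : ℕ) - 1, hjN'⟩] at hmem
        obtain ⟨v, hv⟩ := hmem
        exact ⟨v, fun _ => by rw [← hv, T'_eq T hjN']⟩
      · exact ⟨0, fun hc' => absurd hc' hc⟩
    obtain ⟨u, hu⟩ := imCert q T hT i hi (j : ℕ) hji w v₁ v₂ hv₁ hv₂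
    rw [h j]
    exact ⟨u, by rw [← T'_fin T j]; exact hu.symm⟩

lemma W2 (hU : HU q T U) {i l : ℕ} (hil : i ≤ l) (hl : l < N) {u : M}
    (hu : u ∈ U ⟨l, hl⟩) : X T i (Y q T i u) ∈ Sig U (i + 1) := by
  rcases hU with h | h
  · -- kernel case
    have heig : T' T l u = q • u := by
      rw [T'_eq T hl]; exact UKer q T U hT (Or.inl h) ⟨l, hl⟩ hu
    obtain ⟨a, b, hsum, ha, hb, hia, hbN⟩ := kerY q T hT l hl (l - i) i (by omega) u heig
    rw [hsum, map_add]
    have hmema : X T i a ∈ Sig U (i + 1) := by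
      rcases Nat.eq_or_lt_of_le hil with hie | hlt
      · rw [hia hie, map_zero]; exact Submodule.zero_mem _
      · refine U_le_Sig U ⟨l, hl⟩ (by simp; omega) ?_
        rw [h ⟨l, hl⟩, LinearMap.mem_ker]
        have e := LinearMap.congr_fun (commX q T hT (by omega : i + 1 ≤ l)) a
        simp only [Module.End.mul_apply] at e
        simp only [LinearMap.sub_apply, LinearMap.smul_apply, Module.End.one_apply]
        rw [← T'_eq T hl, e, ha, map_smul, sub_self]
    have hmemb : X T i b ∈ Sig U (i + 1) := by
      rcases Nat.lt_or_ge (l + 1) N with hlN | hlN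
      · refine U_le_Sig U ⟨l + 1, hlN⟩ (by simp; omega) ?_
        rw [h ⟨l + 1, hlN⟩, LinearMap.mem_ker]
        have e := LinearMap.congr_fun (commX q T hT (by omega : i + 1 ≤ l + 1)) b
        simp only [Module.End.mul_apply] at e
        simp only [LinearMap.sub_apply, LinearMap.smul_apply, Module.End.one_apply]
        rw [← T'_eq T hlN, e, hb, map_smul, sub_self]
      · rw [hbN (by omega), map_zero]; exact Submodule.zero_mem _
    exact Submodule.add_mem _ hmema hmemb
  · -- image case
    rw [h ⟨l, hl⟩] at hu
    obtain ⟨v, hv⟩ := hu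
    rw [← T'_eq T hl] at hv
    obtain ⟨a, b, hsum, hia, hbN⟩ := imY q T hT l hl (l - i) i (by omega) v
    rw [← hv, hsum, map_add]
    have hmema : X T i ((T' T l + 1) a) ∈ Sig U (i + 1) := by
      rcases Nat.eq_or_lt_of_le hil with hie | hlt
      · rw [hia hie, map_zero, map_zero]; exact Submodule.zero_mem _
      · refine U_le_Sig U ⟨l, hl⟩ (by simp; omega) ?_
        rw [h ⟨l, hl⟩]
        refine ⟨X T i a, ?_⟩
        have e := swap_app q T hT (X T i)
          (commX q T hT (by omega : i + 1 ≤ l)).symm a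
        rw [← T'_eq T hl, ← e]
    have hmemb : X T i ((T' T (l + 1) + 1) b) ∈ Sig U (i + 1) := by
      rcases Nat.lt_or_ge (l + 1) N with hlN | hlN
      · refine U_le_Sig U ⟨l + 1, hlN⟩ (by simp; omega) ?_
        rw [h ⟨l + 1, hlN⟩]
        refine ⟨X T i b, ?_⟩
        have e := swap_app q T hT (X T i)
          (commX q T hT (by omega : i + 1 ≤ l + 1)).symm b
        rw [← T'_eq T hlN, ← e]
      · rw [hbN (by omega), map_zero, map_zero]; exact Submodule.zero_mem _
    exact Submodule.add_mem _ hmema hmemb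

lemma Ylem (hU : HU q T U) :
    ∀ d i, i + d = N → ∀ m : M,
      Y q T i m - (∑ t ∈ Finset.range (d + 1), q ^ t) • m ∈ Sig U i := by
  intro d
  induction d with
  | zero =>
      intro i hi m
      rw [Y_ge q T (by omega), Finset.sum_range_one, pow_zero, one_smul]
      show m - m ∈ _
      rw [sub_self]; exact Submodule.zero_mem _
  | succ d ih =>
      intro i hi m
      have hiN : i < N := by omega
      have heq : Y q T i m - (∑ t ∈ Finset.range (d + 1 + 1), q ^ t) • m
          = (Y q T (i+1) m - (∑ t ∈ Finset.range (d + 1), q ^ t) • m)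
            - (T' T i + 1) (Y q T (i+1) m) := by
        rw [Yapp q T hiN, Finset.sum_range_succ, add_smul,
          addone_app (T' T i) (Y q T (i+1) m), show N - i = d + 1 by omega]
        abel
      rw [heq]
      refine Submodule.sub_mem _ (Sig_antitone U (by omega) (ih (i+1) (by omega) m)) ?_
      refine U_le_Sig U ⟨i, hiN⟩ (by simp) ?_
      rw [T'_eq T hiN]
      exact UImT q T U hT hU ⟨i, hiN⟩ _

omit hT in
lemma Xeig : ∀ (kk : ℕ) (m : M), (∀ j, j < kk → T' T j m = q • m) →
    X T kk m = (∑ t ∈ Finset.range (kk + 1), q ^ t) • m := by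
  intro kk
  induction kk with
  | zero =>
      intro m _
      show m = _
      rw [Finset.sum_range_one, pow_zero, one_smul]
  | succ kk ih =>
      intro m hm
      rw [Xapp, hm kk (by omega), map_smul, ih m (fun j hj => hm j (by omega)),
        geom_sum_succ (x := q) (n := kk + 1), add_smul, mul_smul, one_smul]
      abel

include hT in
lemma XYid {p : ℕ} (hp : p < N) :
    X T (p+1) * Y q T (p+1) + X T p * Y q T p
      = Y q T (p+1) + q ^ (N - p) • X T p := by
  rw [show X T (p+1) = 1 + X T p * T' T p from rfl, Y_rec q T hp, add_mul, one_mul,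
    mul_sub, mul_smul_comm, mul_one, mul_assoc]
  abel

end HCX


/-- let `M` be a module over the Hecke algebra `H_n(q)`
(`n = N + 1`), and let `U_i = Ker(T_i - q)` or `U_i = Im(T_i + 1)`
(one fixed choice for all `i`).  If the `q`-integer `[n]_q = 1 + q + … + q^{n-1}`
is nonzero, then the complex `K_•(M; (U_i))` with
`K_p = Υ_p/(Υ_p ∩ Σ_p)` and differentials induced by the inclusions is exact;
equivalently, `Υ_p ∩ Σ_{p-1} = Υ_{p+1} + (Υ_p ∩ Σ_p)` for `1 ≤ p ≤ n - 1`. -/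
theorem hecke_complex_exact {M : Type} [AddCommGroup M] [Module k M]
    (q : k) (T : Fin N → Module.End k M) (hT : IsHeckeRep q T)
    (U : Fin N → Submodule k M)
    (hU : (∀ i, U i = LinearMap.ker (T i - q • 1)) ∨
          (∀ i, U i = LinearMap.range (T i + 1)))
    (hq : (∑ m ∈ Finset.range (N + 1), q ^ m) ≠ 0) :
    ∀ p : ℕ, p < N →
      Ups U (p + 1) ⊓ Sig U p = Ups U (p + 2) ⊔ (Ups U (p + 1) ⊓ Sig U (p + 1)) := by
  intro p hp
  have hU' : HCX.HU q T U := hU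
  apply le_antisymm
  · -- hard direction
    intro m hm
    obtain ⟨hm1, hm2⟩ := Submodule.mem_inf.mp hm
    have hp1 : p + 1 ≤ N := by omega
    set A := HCX.X T (p+1) (HCX.Y q T (p+1) m) with hAdef
    set B := HCX.X T p (HCX.Y q T p m) with hBdef
    set s := HCX.Y q T (p+1) m - (∑ t ∈ Finset.range (N - p), q ^ t) • m with hsdef
    have hA : A ∈ Ups U (p + 2) := HCX.XYUps q T U hT hU' hp1 hm1
    have hB1 : B ∈ Ups U (p + 1) :=
      HCX.XYUps q T U hT hU' (by omega) (HCX.Ups_antitone U (by omega) hm1)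
    have hB2 : B ∈ Sig U (p + 1) := by
      have hmap : Sig U p ≤ Submodule.comap
          ((HCX.X T p * HCX.Y q T p : Module.End k M) : M →ₗ[k] M) (Sig U (p + 1)) := by
        refine iSup₂_le fun j hj => ?_
        intro u hu
        simp only [Submodule.mem_comap, Module.End.mul_apply]
        have hjeta : (⟨(j : ℕ), j.2⟩ : Fin N) = j := rfl
        exact HCX.W2 q T U hT hU' (by omega : p ≤ (j : ℕ)) j.2 (by rw [hjeta]; exact hu)
      have := hmap hm2
      simpa only [Submodule.mem_comap, Module.End.mul_apply] using this
    have hs1 : s ∈ Sig U (p + 1) := by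
      have := HCX.Ylem q T U hT hU' (N - (p+1)) (p+1) (by omega) m
      rw [show N - (p+1) + 1 = N - p by omega] at this
      exact this
    have hs2 : s ∈ Ups U (p + 1) :=
      Submodule.sub_mem _ (HCX.YUps q T U hT hU' hm1)
        (Submodule.smul_mem _ _ hm1)
    have hid := LinearMap.congr_fun (HCX.XYid q T hT hp) m
    simp only [LinearMap.add_apply, Module.End.mul_apply, LinearMap.smul_apply] at hid
    have hXp : HCX.X T p m = (∑ t ∈ Finset.range (p + 1), q ^ t) • m :=
      HCX.Xeig q T p m (fun j hj =>
        HCX.eigUps q T U hT hU' (by omega : p + 1 ≤ N) hm1 j (by omega))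
    have hsc : (∑ t ∈ Finset.range (N - p), q ^ t)
        + q ^ (N - p) * (∑ t ∈ Finset.range (p + 1), q ^ t)
        = ∑ t ∈ Finset.range (N + 1), q ^ t := by
      have h1 := Finset.sum_range_add (fun t => q ^ t) (N - p) (p + 1)
      rw [show N - p + (p + 1) = N + 1 by omega] at h1
      rw [h1, Finset.mul_sum]
      congr 1
      exact Finset.sum_congr rfl fun i _ => (pow_add q (N - p) i).symm
    have e2 : A + B = (∑ t ∈ Finset.range (N + 1), q ^ t) • m + s := by
      rw [hAdef, hBdef, hid, hXp, smul_smul, ← hsc, add_smul, hsdef]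
      abel
    have key : (∑ t ∈ Finset.range (N + 1), q ^ t) • m = A + (B - s) := by
      have h3 : A + (B - s) = (A + B) - s := by abel
      rw [h3, e2]; abel
    have hmem : (∑ t ∈ Finset.range (N + 1), q ^ t) • m
        ∈ Ups U (p + 2) ⊔ (Ups U (p + 1) ⊓ Sig U (p + 1)) := by
      rw [key]
      exact Submodule.add_mem_sup hA
        (Submodule.mem_inf.mpr ⟨Submodule.sub_mem _ hB1 hs2, Submodule.sub_mem _ hB2 hs1⟩)
    have hmm : m = (∑ t ∈ Finset.range (N + 1), q ^ t)⁻¹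
        • ((∑ t ∈ Finset.range (N + 1), q ^ t) • m) := by
      rw [smul_smul, inv_mul_cancel₀ hq, one_smul]
    rw [hmm]
    exact Submodule.smul_mem _ _ hmem
  · -- easy direction
    apply sup_le
    · refine le_inf (HCX.Ups_antitone U (by omega)) ?_
      exact le_trans (HCX.Ups_le U ⟨p, hp⟩ (by simp)) (HCX.U_le_Sig U ⟨p, hp⟩ (by simp))
    · exact inf_le_inf le_rfl (HCX.Sig_antitone U (by omega))

end
end

section
/- Let S_λ ⊆ S_μ be Young subgroups of S_n, let M be an H_n(q)-module, and for each basic transposition index j set U_j = Ker((T_j - q) on M) (or U_j = Im((T_j+1) on M) uniformly). Put Υ(λ) = ∩_{τ_j ∈ B_λ} U_j and Σ(λ) = Σ_{τ_j ∈ B_λ} U_j, and similarly for μ. Then with x = Σ_{σ ∈ D(S_μ/S_λ)} T_σ and y = Σ_{σ ∈ D(S_λ\S_μ)} (-1)^{ℓ(σ)} q^{m-ℓ(σ)} T_σ (m the maximal length of elements of D(S_λ\S_μ)), one has x·Υ(λ) ⊆ Υ(μ) and y·Σ(μ) ⊆ Σ(λ). -/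
noncomputable section
open Classical

variable {k : Type} [Field k] {N : ℕ}

/-- The basic transposition `τ_i = (i, i+1)` in `S_{N+1}`. -/
def tau (i : Fin N) : Equiv.Perm (Fin (N + 1)) := Equiv.swap i.castSucc i.succ

/-- The Coxeter length of a permutation. -/
def len (σ : Equiv.Perm (Fin (N + 1))) : ℕ :=
  sInf {m | ∃ l : List (Fin N), l.length = m ∧ (l.map tau).prod = σ}

/-- The Young subgroup `S_λ` generated by the basic transpositions indexed by `B`. -/
def youngSubgroup (B : Set (Fin N)) : Subgroup (Equiv.Perm (Fin (N + 1))) :=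
  Subgroup.closure (tau '' B)

/-- `σ` is a distinguished (minimal length) left coset representative of `σ S_λ`. -/
def IsDistL (B : Set (Fin N)) (σ : Equiv.Perm (Fin (N + 1))) : Prop :=
  ∀ s ∈ youngSubgroup B, len σ ≤ len (σ * s)

/-- `σ` is a distinguished (minimal length) right coset representative of `S_λ σ`. -/
def IsDistR (B : Set (Fin N)) (σ : Equiv.Perm (Fin (N + 1))) : Prop :=
  ∀ s ∈ youngSubgroup B, len σ ≤ len (s * σ)

/-- The standard basis element `T_σ`: the product of the `T_i` along a reduced
word for `σ` (junk value `0` if no word exists, which never happens). -/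
def Tperm {M : Type} [AddCommGroup M] [Module k M]
    (T : Fin N → Module.End k M) (σ : Equiv.Perm (Fin (N + 1))) : Module.End k M :=
  if h : ∃ l : List (Fin N), (l.map tau).prod = σ ∧ l.length = len σ then
    ((h.choose.map T).prod) else 0

/-!
Length equals the number of inversions, so multiplying by a basic transposition changes the
length by exactly one, according to a descent condition; with the braid relations this gives
Matsumoto's word property, hence `T_{τ_j σ} = T_j T_σ` whenever `ℓ(τ_j σ) > ℓ(σ)`.
A permutation is a distinguished representative of `σ S_λ` iff it has no descent in `B_λ`, and
Deodhar's lemma says that if `σ` is distinguished but `τ_j σ` is not, then `τ_j σ = σ τ_i` with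
`τ_i ∈ B_λ`. So for `τ_j ∈ B_μ` the terms of `x` either pair up as `{σ, τ_j σ}`, contributing
`(T_j + 1) T_σ`, whose image lies in `U_j`, or are single terms with `T_j T_σ = T_σ T_i`, so that
`T_σ` maps `U_i` into `U_j`. Dually, the pairs of `y` contribute multiples of `T_σ (q - T_j)`,
which kill `U_j ⊆ Ker(T_j - q)`, and the single terms map `U_j` into some `U_i` with `τ_i ∈ B_λ`.
-/

open Finset

lemma tau_apply_castSucc (i : Fin N) : tau i i.castSucc = i.succ := Equiv.swap_apply_left _ _

lemma tau_apply_succ (i : Fin N) : tau i i.succ = i.castSucc := Equiv.swap_apply_right _ _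

lemma tau_apply_of_val_ne {i : Fin N} {p : Fin (N + 1)} (h₁ : (p : ℕ) ≠ i) (h₂ : (p : ℕ) ≠ i + 1) :
    tau i p = p :=
  Equiv.swap_apply_of_ne_of_ne (Fin.ne_of_val_ne h₁) (Fin.ne_of_val_ne h₂)

lemma val_tau_apply (i : Fin N) (p : Fin (N + 1)) :
    (tau i p : ℕ) =
      if (p : ℕ) = i then (i : ℕ) + 1 else if (p : ℕ) = i + 1 then (i : ℕ) else p := by
  unfold tau
  rw [Equiv.swap_apply_def]
  split_ifs <;> simp_all [Fin.ext_iff]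

@[simp]
lemma tau_mul_self (i : Fin N) : tau i * tau i = 1 := Equiv.swap_mul_self _ _

@[simp]
lemma tau_inv (i : Fin N) : (tau i)⁻¹ = tau i := Equiv.swap_inv _ _

@[simp]
lemma tau_apply_tau_apply (i : Fin N) (p : Fin (N + 1)) : tau i (tau i p) = p :=
  Equiv.swap_apply_self _ _ _

lemma tau_lt_tau {i : Fin N} {p r : Fin (N + 1)} (h : p < r)
    (hne : (p, r) ≠ (i.castSucc, i.succ)) : tau i p < tau i r := by
  simp only [ne_eq, Prod.mk.injEq, Fin.ext_iff, Fin.val_castSucc, Fin.val_succ] at hne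
  rw [Fin.lt_def] at h ⊢
  rw [val_tau_apply, val_tau_apply]
  split_ifs <;> omega

lemma tau_mul_tau_mul_tau (i j : Fin N) :
    tau i * tau j * tau i = Equiv.swap (tau i j.castSucc) (tau i j.succ) := by
  rw [Equiv.swap_apply_apply, tau_inv]
  rfl

structure SatisfiesBraidRelations {A : Type*} [Monoid A] (T : Fin N → A) : Prop where
  braid : ∀ i j : Fin N, ((i : ℕ) + 1 = j ∨ (j : ℕ) + 1 = i) → T i * T j * T i = T j * T i * T j
  comm : ∀ i j : Fin N, ((i : ℕ) + 1 < j ∨ (j : ℕ) + 1 < i) → T i * T j = T j * T i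

lemma satisfiesBraidRelations_tau : SatisfiesBraidRelations (tau (N := N)) where
  braid i j h := by
    rw [tau_mul_tau_mul_tau, tau_mul_tau_mul_tau]
    congr 1 <;> ext <;> simp only [val_tau_apply, Fin.val_castSucc, Fin.val_succ] <;>
      split_ifs <;> omega
  comm i j h := by
    have hconj : tau i * tau j * tau i = tau j := by
      rw [tau_mul_tau_mul_tau]
      congr 1 <;> ext <;> simp only [val_tau_apply, Fin.val_castSucc, Fin.val_succ] <;>
        split_ifs <;> omega
    calc tau i * tau j = tau i * tau j * tau i * tau i := by simp [mul_assoc]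
      _ = tau j * tau i := by rw [hconj]

lemma apply_castSucc_lt_or_gt (σ : Equiv.Perm (Fin (N + 1))) (i : Fin N) :
    σ i.castSucc < σ i.succ ∨ σ i.succ < σ i.castSucc :=
  (σ.injective.ne (Fin.castSucc_lt_succ (i := i)).ne).lt_or_gt

lemma apply_succ_lt_apply_castSucc_iff (σ : Equiv.Perm (Fin (N + 1))) (i : Fin N) :
    σ i.succ < σ i.castSucc ↔ ¬σ i.castSucc < σ i.succ :=
  ⟨fun h h' => h.asymm h', (apply_castSucc_lt_or_gt σ i).resolve_left⟩

lemma mul_tau_apply_castSucc_lt_iff (σ : Equiv.Perm (Fin (N + 1))) (i : Fin N) :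
    (σ * tau i) i.castSucc < (σ * tau i) i.succ ↔ ¬σ i.castSucc < σ i.succ := by
  simpa [tau_apply_castSucc, tau_apply_succ] using apply_succ_lt_apply_castSucc_iff σ i

lemma inv_tau_mul_apply_castSucc_lt_iff (σ : Equiv.Perm (Fin (N + 1))) (i : Fin N) :
    (tau i * σ)⁻¹ i.castSucc < (tau i * σ)⁻¹ i.succ ↔ ¬σ⁻¹ i.castSucc < σ⁻¹ i.succ := by
  simpa using mul_tau_apply_castSucc_lt_iff σ⁻¹ i

def inversions (σ : Equiv.Perm (Fin (N + 1))) : Finset (Fin (N + 1) × Fin (N + 1)) :=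
  Finset.univ.filter fun p => p.1 < p.2 ∧ σ p.2 < σ p.1

lemma mem_inversions {σ : Equiv.Perm (Fin (N + 1))} {p : Fin (N + 1) × Fin (N + 1)} :
    p ∈ inversions σ ↔ p.1 < p.2 ∧ σ p.2 < σ p.1 := by
  simp [inversions]

@[simp]
lemma inversions_one : inversions (1 : Equiv.Perm (Fin (N + 1))) = ∅ := by
  ext p
  simpa [mem_inversions] using fun h => h.le

lemma mapsTo_erase_inversions_mul_tau (σ : Equiv.Perm (Fin (N + 1))) (i : Fin N) :
    Set.MapsTo (fun p : Fin (N + 1) × Fin (N + 1) => (tau i p.1, tau i p.2))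
      ((inversions σ).erase (i.castSucc, i.succ))
      ((inversions (σ * tau i)).erase (i.castSucc, i.succ)) := by
  intro p hp
  obtain ⟨hne, hp⟩ := Finset.mem_erase.1 hp
  obtain ⟨hlt, hinv⟩ := mem_inversions.1 hp
  refine Finset.mem_erase.2 ⟨fun h => ?_, mem_inversions.2 ⟨tau_lt_tau hlt hne, by simpa⟩⟩
  simp only [Prod.mk.injEq] at h
  have h₁ : p.1 = i.succ := by rw [← tau_apply_tau_apply i p.1, h.1, tau_apply_castSucc]
  have h₂ : p.2 = i.castSucc := by rw [← tau_apply_tau_apply i p.2, h.2, tau_apply_succ]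
  exact (Fin.castSucc_lt_succ (i := i)).not_gt (h₁ ▸ h₂ ▸ hlt)

lemma card_inversions_mul_tau_of_lt {σ : Equiv.Perm (Fin (N + 1))} {i : Fin N}
    (h : σ i.castSucc < σ i.succ) : #(inversions (σ * tau i)) = #(inversions σ) + 1 := by
  have hmem : (i.castSucc, i.succ) ∈ inversions (σ * tau i) :=
    mem_inversions.2 ⟨Fin.castSucc_lt_succ, by simpa [tau_apply_castSucc, tau_apply_succ]⟩
  have hnmem : (i.castSucc, i.succ) ∉ inversions σ := fun h' => (mem_inversions.1 h').2.asymm h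
  have hcard : #((inversions (σ * tau i)).erase (i.castSucc, i.succ)) = #(inversions σ) := by
    have hback := mapsTo_erase_inversions_mul_tau (σ * tau i) i
    rw [mul_assoc, tau_mul_self, mul_one] at hback
    rw [← Finset.erase_eq_of_notMem hnmem]
    exact Finset.card_nbij' _ _ hback (mapsTo_erase_inversions_mul_tau σ i)
      (fun p _ => by simp) (fun p _ => by simp)
  rw [← Finset.card_erase_add_one hmem, hcard]

lemma card_inversions_mul_tau_of_gt {σ : Equiv.Perm (Fin (N + 1))} {i : Fin N}
    (h : σ i.succ < σ i.castSucc) : #(inversions (σ * tau i)) + 1 = #(inversions σ) := by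
  have := card_inversions_mul_tau_of_lt (σ := σ * tau i) (i := i)
    (by simpa [tau_apply_castSucc, tau_apply_succ])
  simpa [mul_assoc] using this.symm

lemma eq_one_of_forall_apply_castSucc_lt {σ : Equiv.Perm (Fin (N + 1))}
    (h : ∀ i : Fin N, σ i.castSucc < σ i.succ) : σ = 1 := by
  have hmono : StrictMono σ := Fin.strictMono_iff_lt_succ.2 h
  exact Equiv.ext (congrFun ((hmono.range_inj strictMono_id).1 (by simp)))

lemma exists_word_length_eq_card_inversions (σ : Equiv.Perm (Fin (N + 1))) :
    ∃ l : List (Fin N), (l.map tau).prod = σ ∧ l.length = #(inversions σ) := by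
  induction hn : #(inversions σ) using Nat.strong_induction_on generalizing σ with
  | _ n ih =>
  by_cases hdesc : ∃ i : Fin N, σ i.succ < σ i.castSucc
  · obtain ⟨i, hi⟩ := hdesc
    have hcard := card_inversions_mul_tau_of_gt hi
    obtain ⟨l, hl, hlen⟩ := ih _ (by omega) (σ * tau i) rfl
    exact ⟨l ++ [i], by simp [hl, mul_assoc], by simp; omega⟩
  · simp only [not_exists, not_lt] at hdesc
    obtain rfl := eq_one_of_forall_apply_castSucc_lt fun i =>
      (apply_castSucc_lt_or_gt σ i).resolve_right (hdesc i).not_gt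
    exact ⟨[], rfl, by simp [← hn]⟩

lemma card_inversions_prod_le (l : List (Fin N)) : #(inversions (l.map tau).prod) ≤ l.length := by
  induction l using List.reverseRecOn with
  | nil => simp
  | append_singleton l i ih =>
    simp only [List.map_append, List.map_singleton, List.prod_append, List.prod_singleton,
      List.length_append, List.length_singleton]
    rcases apply_castSucc_lt_or_gt (l.map tau).prod i with h | h
    · rw [card_inversions_mul_tau_of_lt h]
      omega
    · have := card_inversions_mul_tau_of_gt h
      omega

lemma len_eq_card_inversions (σ : Equiv.Perm (Fin (N + 1))) : len σ = #(inversions σ) := by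
  obtain ⟨l, hl, hlen⟩ := exists_word_length_eq_card_inversions σ
  refine le_antisymm (Nat.sInf_le ⟨l, hlen, hl⟩) (le_csInf ⟨_, l, hlen, hl⟩ ?_)
  rintro _ ⟨l', rfl, rfl⟩
  exact card_inversions_prod_le l'

lemma len_prod_le (l : List (Fin N)) : len (l.map tau).prod ≤ l.length :=
  Nat.sInf_le ⟨l, rfl, rfl⟩

lemma len_mul_tau_of_lt {σ : Equiv.Perm (Fin (N + 1))} {i : Fin N}
    (h : σ i.castSucc < σ i.succ) : len (σ * tau i) = len σ + 1 := by
  rw [len_eq_card_inversions, len_eq_card_inversions, card_inversions_mul_tau_of_lt h]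

lemma len_mul_tau_of_gt {σ : Equiv.Perm (Fin (N + 1))} {i : Fin N}
    (h : σ i.succ < σ i.castSucc) : len (σ * tau i) + 1 = len σ := by
  rw [len_eq_card_inversions, len_eq_card_inversions, card_inversions_mul_tau_of_gt h]

def IsReducedWord (σ : Equiv.Perm (Fin (N + 1))) (l : List (Fin N)) : Prop :=
  (l.map tau).prod = σ ∧ l.length = len σ

lemma exists_isReducedWord (σ : Equiv.Perm (Fin (N + 1))) : ∃ l, IsReducedWord σ l := by
  obtain ⟨l, hl, hlen⟩ := exists_word_length_eq_card_inversions σ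
  exact ⟨l, hl, hlen.trans (len_eq_card_inversions σ).symm⟩

lemma len_inv (σ : Equiv.Perm (Fin (N + 1))) : len σ⁻¹ = len σ := by
  have key : ∀ ρ : Equiv.Perm (Fin (N + 1)), len ρ⁻¹ ≤ len ρ := fun ρ => by
    obtain ⟨l, rfl, hlen⟩ := exists_isReducedWord ρ
    rw [← hlen, List.prod_inv_reverse, List.map_map, ← List.length_reverse]
    simpa [Function.comp_def] using len_prod_le l.reverse
  exact le_antisymm (key σ) (by simpa using key σ⁻¹)

lemma len_tau_mul_of_lt {σ : Equiv.Perm (Fin (N + 1))} {i : Fin N}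
    (h : σ⁻¹ i.castSucc < σ⁻¹ i.succ) : len (tau i * σ) = len σ + 1 := by
  rw [← len_inv, mul_inv_rev, tau_inv, len_mul_tau_of_lt h, len_inv]

lemma len_tau_mul_of_gt {σ : Equiv.Perm (Fin (N + 1))} {i : Fin N}
    (h : σ⁻¹ i.succ < σ⁻¹ i.castSucc) : len (tau i * σ) + 1 = len σ := by
  rw [← len_inv, mul_inv_rev, tau_inv, len_mul_tau_of_gt h, len_inv]

lemma isReducedWord_cons_iff {σ : Equiv.Perm (Fin (N + 1))} {a : Fin N} {t : List (Fin N)} :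
    IsReducedWord σ (a :: t) ↔
      IsReducedWord (tau a * σ) t ∧ σ⁻¹ a.succ < σ⁻¹ a.castSucc := by
  constructor
  · rintro ⟨hprod, hlen⟩
    have htail : (t.map tau).prod = tau a * σ := by simp [← hprod, ← mul_assoc]
    have hdesc : σ⁻¹ a.succ < σ⁻¹ a.castSucc := by
      refine (apply_succ_lt_apply_castSucc_iff σ⁻¹ a).2 fun h => ?_
      have := len_prod_le t
      rw [htail, len_tau_mul_of_lt h, ← hlen, List.length_cons] at this
      omega
    have := len_tau_mul_of_gt hdesc
    exact ⟨⟨htail, by simp only [List.length_cons] at hlen; omega⟩, hdesc⟩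
  · rintro ⟨⟨hprod, hlen⟩, hdesc⟩
    refine ⟨by simp [hprod, ← mul_assoc], ?_⟩
    rw [List.length_cons, hlen, len_tau_mul_of_gt hdesc]

lemma descent_tau_mul_of_far {σ : Equiv.Perm (Fin (N + 1))} {a b : Fin N}
    (hab : (a : ℕ) + 1 < b ∨ (b : ℕ) + 1 < a) (hb : σ⁻¹ b.succ < σ⁻¹ b.castSucc) :
    (tau a * σ)⁻¹ b.succ < (tau a * σ)⁻¹ b.castSucc := by
  have h₁ : tau a b.succ = b.succ := tau_apply_of_val_ne (by simp; omega) (by simp; omega)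
  have h₂ : tau a b.castSucc = b.castSucc := tau_apply_of_val_ne (by simp; omega) (by simp; omega)
  simpa [h₁, h₂] using hb

lemma descent_tau_mul_of_adjacent {σ : Equiv.Perm (Fin (N + 1))} {a b : Fin N}
    (hab : (a : ℕ) + 1 = b) (ha : σ⁻¹ a.succ < σ⁻¹ a.castSucc)
    (hb : σ⁻¹ b.succ < σ⁻¹ b.castSucc) :
    (tau a * σ)⁻¹ b.succ < (tau a * σ)⁻¹ b.castSucc ∧
      (tau b * (tau a * σ))⁻¹ a.succ < (tau b * (tau a * σ))⁻¹ a.castSucc ∧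
      (tau b * σ)⁻¹ a.succ < (tau b * σ)⁻¹ a.castSucc ∧
      (tau a * (tau b * σ))⁻¹ b.succ < (tau a * (tau b * σ))⁻¹ b.castSucc := by
  have hmid : b.castSucc = a.succ := Fin.ext (by simp [hab])
  have hfix₁ : tau a b.succ = b.succ := tau_apply_of_val_ne (by simp; omega) (by simp; omega)
  have hfix₂ : tau b a.castSucc = a.castSucc :=
    tau_apply_of_val_ne (by simp; omega) (by simp; omega)
  have hb₁ : tau b a.succ = b.succ := hmid ▸ tau_apply_castSucc b
  have hb₂ : tau b b.succ = a.succ := hmid ▸ tau_apply_succ b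
  rw [hmid] at hb ⊢
  simp only [mul_inv_rev, tau_inv, Equiv.Perm.mul_apply, tau_apply_castSucc, tau_apply_succ,
    hfix₁, hfix₂, hb₁, hb₂]
  exact ⟨hb.trans ha, hb, hb.trans ha, ha⟩

lemma exists_braid_move {A : Type*} [Monoid A] {T : Fin N → A} (hT : SatisfiesBraidRelations T)
    {σ : Equiv.Perm (Fin (N + 1))} {a b : Fin N} (hab : a ≠ b)
    (ha : σ⁻¹ a.succ < σ⁻¹ a.castSucc) (hb : σ⁻¹ b.succ < σ⁻¹ b.castSucc) :
    ∃ w w', IsReducedWord (tau a * σ) w ∧ IsReducedWord (tau b * σ) w' ∧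
      T a * (w.map T).prod = T b * (w'.map T).prod := by
  wlog hlt : (a : ℕ) < b generalizing a b
  · obtain ⟨w, w', hw, hw', hmove⟩ := this hab.symm hb ha (by have := Fin.val_ne_of_ne hab; omega)
    exact ⟨w', w, hw', hw, hmove.symm⟩
  rcases (show (a : ℕ) + 1 = b ∨ (a : ℕ) + 1 < b by omega) with hadj | hfar
  · obtain ⟨d₁, d₂, d₃, d₄⟩ := descent_tau_mul_of_adjacent hadj ha hb
    obtain ⟨r, hr⟩ := exists_isReducedWord (tau a * (tau b * (tau a * σ)))
    have hbraid : tau a * (tau b * (tau a * σ)) = tau b * (tau a * (tau b * σ)) := by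
      simp only [← mul_assoc, satisfiesBraidRelations_tau.braid a b (Or.inl hadj)]
    refine ⟨b :: a :: r, a :: b :: r,
      isReducedWord_cons_iff.2 ⟨isReducedWord_cons_iff.2 ⟨hr, d₂⟩, d₁⟩,
      isReducedWord_cons_iff.2 ⟨isReducedWord_cons_iff.2 ⟨hbraid ▸ hr, d₄⟩, d₃⟩, ?_⟩
    simp only [List.map_cons, List.prod_cons, ← mul_assoc, hT.braid a b (Or.inl hadj)]
  · have hcomm := satisfiesBraidRelations_tau.comm a b (Or.inl hfar)
    obtain ⟨r, hr⟩ := exists_isReducedWord (tau b * (tau a * σ))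
    have hr' : IsReducedWord (tau a * (tau b * σ)) r := by rwa [← mul_assoc, hcomm, mul_assoc]
    refine ⟨b :: r, a :: r, isReducedWord_cons_iff.2 ⟨hr, descent_tau_mul_of_far (Or.inl hfar) hb⟩,
      isReducedWord_cons_iff.2 ⟨hr', descent_tau_mul_of_far (Or.inr hfar) ha⟩, ?_⟩
    simp only [List.map_cons, List.prod_cons, ← mul_assoc, hT.comm a b (Or.inl hfar)]

theorem prod_map_eq_of_isReducedWord {A : Type*} [Monoid A] {T : Fin N → A}
    (hT : SatisfiesBraidRelations T) {σ : Equiv.Perm (Fin (N + 1))} {l l' : List (Fin N)}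
    (hl : IsReducedWord σ l) (hl' : IsReducedWord σ l') : (l.map T).prod = (l'.map T).prod := by
  induction hn : len σ using Nat.strong_induction_on generalizing σ l l' with
  | _ n ih =>
  match l, l', hl, hl' with
  | [], [], _, _ => rfl
  | [], _ :: _, hl, hl' | _ :: _, [], hl, hl' =>
    simp only [IsReducedWord, List.length_nil, List.length_cons] at hl hl'
    omega
  | a :: t, b :: t', hl, hl' =>
    rw [isReducedWord_cons_iff] at hl hl'
    have hlt : ∀ c : Fin N, σ⁻¹ c.succ < σ⁻¹ c.castSucc → len (tau c * σ) < n := fun c hc => by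
      have := len_tau_mul_of_gt hc
      omega
    simp only [List.map_cons, List.prod_cons]
    by_cases hab : a = b
    · subst hab
      rw [ih _ (hlt a hl.2) hl.1 hl'.1 rfl]
    · obtain ⟨w, w', hw, hw', hmove⟩ := exists_braid_move hT hab hl.2 hl'.2
      rw [ih _ (hlt a hl.2) hl.1 hw rfl, ih _ (hlt b hl'.2) hl'.1 hw' rfl, hmove]

section Tperm

variable {M : Type} [AddCommGroup M] [Module k M] {T : Fin N → Module.End k M}

lemma Tperm_eq_prod (hT : SatisfiesBraidRelations T) {σ : Equiv.Perm (Fin (N + 1))}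
    {l : List (Fin N)} (hl : IsReducedWord σ l) : Tperm T σ = (l.map T).prod := by
  have hex : ∃ l, IsReducedWord σ l := ⟨l, hl⟩
  rw [Tperm]
  exact (dif_pos hex).trans (prod_map_eq_of_isReducedWord hT hex.choose_spec hl)

lemma Tperm_tau_mul (hT : SatisfiesBraidRelations T) {σ : Equiv.Perm (Fin (N + 1))} {j : Fin N}
    (h : len (tau j * σ) = len σ + 1) : Tperm T (tau j * σ) = T j * Tperm T σ := by
  obtain ⟨l, hprod, hlen⟩ := exists_isReducedWord σ
  rw [Tperm_eq_prod hT ⟨hprod, hlen⟩,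
    Tperm_eq_prod hT (l := j :: l) ⟨by simp [hprod], by simp [hlen, h]⟩]
  simp

lemma Tperm_mul_tau (hT : SatisfiesBraidRelations T) {σ : Equiv.Perm (Fin (N + 1))} {j : Fin N}
    (h : len (σ * tau j) = len σ + 1) : Tperm T (σ * tau j) = Tperm T σ * T j := by
  obtain ⟨l, hprod, hlen⟩ := exists_isReducedWord σ
  rw [Tperm_eq_prod hT ⟨hprod, hlen⟩,
    Tperm_eq_prod hT (l := l ++ [j]) ⟨by simp [hprod], by simp [hlen, h]⟩]
  simp

end Tperm

lemma tau_mem_youngSubgroup {B : Set (Fin N)} {i : Fin N} (hi : i ∈ B) : tau i ∈ youngSubgroup B :=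
  Subgroup.subset_closure ⟨i, hi, rfl⟩

/-- Counts the walls `i ∉ B` to the left of `p`, so that it is constant exactly on the blocks
permuted by `youngSubgroup B`. -/
def blockIndex (B : Set (Fin N)) (p : Fin (N + 1)) : ℕ :=
  #(Finset.univ.filter fun i : Fin N => i ∉ B ∧ i.succ ≤ p)

lemma blockIndex_mono (B : Set (Fin N)) : Monotone (blockIndex B) := fun _ _ hpr =>
  Finset.card_le_card fun i hi => by
    simp only [Finset.mem_filter, Finset.mem_univ, true_and] at hi ⊢
    exact ⟨hi.1, hi.2.trans hpr⟩

lemma blockIndex_succ_of_mem {B : Set (Fin N)} {i : Fin N} (hi : i ∈ B) :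
    blockIndex B i.succ = blockIndex B i.castSucc := by
  unfold blockIndex
  congr 1
  ext j
  simp only [Finset.mem_filter, Finset.mem_univ, true_and, and_congr_right_iff]
  intro hj
  have : (j : ℕ) ≠ i := fun h => hj (Fin.ext h ▸ hi)
  simp only [Fin.le_def, Fin.val_succ, Fin.val_castSucc]
  omega

lemma blockIndex_tau_apply {B : Set (Fin N)} {i : Fin N} (hi : i ∈ B) (p : Fin (N + 1)) :
    blockIndex B (tau i p) = blockIndex B p := by
  by_cases h₁ : p = i.castSucc
  · rw [h₁, tau_apply_castSucc, blockIndex_succ_of_mem hi]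
  by_cases h₂ : p = i.succ
  · rw [h₂, tau_apply_succ, blockIndex_succ_of_mem hi]
  rw [tau, Equiv.swap_apply_of_ne_of_ne h₁ h₂]

lemma blockIndex_apply_of_mem_youngSubgroup {B : Set (Fin N)} {u : Equiv.Perm (Fin (N + 1))}
    (hu : u ∈ youngSubgroup B) (p : Fin (N + 1)) : blockIndex B (u p) = blockIndex B p := by
  induction hu using Subgroup.closure_induction generalizing p with
  | mem _ h =>
    obtain ⟨i, hi, rfl⟩ := h
    exact blockIndex_tau_apply hi p
  | one => rfl
  | mul u w _ _ hu hw => rw [Equiv.Perm.mul_apply, hu, hw]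
  | inv u _ hu => simpa using (hu (u⁻¹ p)).symm

lemma mem_of_blockIndex_eq {B : Set (Fin N)} {p r : Fin (N + 1)} {i : Fin N}
    (hp : p ≤ i.castSucc) (hr : i.succ ≤ r) (h : blockIndex B p = blockIndex B r) : i ∈ B := by
  by_contra hi
  have hpi : p < i.succ := hp.trans_lt Fin.castSucc_lt_succ
  refine h.not_lt (card_lt_card ((ssubset_iff_of_subset fun j hj => ?_).2 ⟨i, ?_, ?_⟩))
  · simp only [Finset.mem_filter, Finset.mem_univ, true_and] at hj ⊢
    exact ⟨hj.1, hj.2.trans (hpi.le.trans hr)⟩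
  · simpa using ⟨hi, hr⟩
  · simpa using fun _ => hpi

lemma apply_lt_apply_of_blockIndex_eq {B : Set (Fin N)} {σ : Equiv.Perm (Fin (N + 1))}
    (hσ : ∀ i ∈ B, σ i.castSucc < σ i.succ) {p r : Fin (N + 1)} (hpr : p < r)
    (h : blockIndex B p = blockIndex B r) : σ p < σ r := by
  induction r using Fin.induction with
  | zero => exact absurd hpr (Fin.not_lt_zero p)
  | succ i ih =>
    have hp : p ≤ i.castSucc := Fin.le_castSucc_iff.2 hpr
    have hstep := hσ i (mem_of_blockIndex_eq hp le_rfl h)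
    rcases hp.eq_or_lt with rfl | hlt
    · exact hstep
    · have hblock : blockIndex B p = blockIndex B i.castSucc :=
        le_antisymm (blockIndex_mono B hp)
          (h ▸ blockIndex_mono B (Fin.castSucc_lt_succ (i := i)).le)
      exact (ih hlt hblock).trans hstep

lemma isDistL_of_forall_lt {B : Set (Fin N)} {σ : Equiv.Perm (Fin (N + 1))}
    (hσ : ∀ i ∈ B, σ i.castSucc < σ i.succ) : IsDistL B σ := by
  intro u hu
  rw [len_eq_card_inversions, len_eq_card_inversions]
  refine Finset.card_le_card_of_injOn (fun p => (u⁻¹ p.1, u⁻¹ p.2)) (fun p hp => ?_)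
    (fun p _ p' _ h => by simpa [Prod.ext_iff] using h)
  obtain ⟨hlt, hinv⟩ := mem_inversions.1 hp
  refine mem_inversions.2 ⟨lt_of_not_ge fun hge => hinv.not_gt ?_, by simpa using hinv⟩
  have hblock (x) : blockIndex B (u⁻¹ x) = blockIndex B x :=
    blockIndex_apply_of_mem_youngSubgroup (inv_mem hu) x
  refine apply_lt_apply_of_blockIndex_eq hσ hlt (le_antisymm (blockIndex_mono B hlt.le) ?_)
  rw [← hblock p.1, ← hblock p.2]
  exact blockIndex_mono B hge

lemma isDistL_iff {B : Set (Fin N)} {σ : Equiv.Perm (Fin (N + 1))} :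
    IsDistL B σ ↔ ∀ i ∈ B, σ i.castSucc < σ i.succ := by
  refine ⟨fun hσ i hi => (apply_castSucc_lt_or_gt σ i).resolve_right fun hgt => ?_,
    isDistL_of_forall_lt⟩
  have := hσ (tau i) (tau_mem_youngSubgroup hi)
  have := len_mul_tau_of_gt hgt
  omega

lemma isDistR_iff_isDistL_inv {B : Set (Fin N)} {σ : Equiv.Perm (Fin (N + 1))} :
    IsDistR B σ ↔ IsDistL B σ⁻¹ := by
  have hlen (s) : len (σ⁻¹ * s) = len (s⁻¹ * σ) := by rw [← len_inv, mul_inv_rev, inv_inv]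
  refine ⟨fun hσ s hs => ?_, fun hσ s hs => ?_⟩
  · rw [len_inv, hlen]
    exact hσ _ (inv_mem hs)
  · simpa [len_inv, hlen] using hσ _ (inv_mem hs)

lemma exists_tau_mul_eq_mul_tau {B : Set (Fin N)} {σ : Equiv.Perm (Fin (N + 1))} {j : Fin N}
    (hσ : IsDistL B σ) (h : ¬IsDistL B (tau j * σ)) : ∃ i ∈ B, tau j * σ = σ * tau i := by
  rw [isDistL_iff] at hσ h
  simp only [not_forall, not_lt] at h
  obtain ⟨i, hi, hle⟩ := h
  have hpair : (σ i.castSucc, σ i.succ) = (j.castSucc, j.succ) :=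
    by_contra fun hne => (tau_lt_tau (hσ i hi) hne).not_ge hle
  simp only [Prod.mk.injEq] at hpair
  refine ⟨i, hi, ?_⟩
  rw [tau, ← hpair.1, ← hpair.2, Equiv.swap_apply_apply, inv_mul_cancel_right]
  rfl

lemma sum_eq_sum_pairs_add_sum_unpaired {α β : Type*} [DecidableEq α] [AddCommMonoid β]
    (s : Finset α) {φ : α → α} (hφ : Function.Involutive φ) {P : α → Prop} [DecidablePred P]
    (hP : ∀ a, P (φ a) ↔ ¬P a) (f : α → β) :
    ∑ a ∈ s, f a = ∑ a ∈ s with φ a ∈ s ∧ P a, (f a + f (φ a)) + ∑ a ∈ s with φ a ∉ s, f a := by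
  rw [← Finset.sum_filter_add_sum_filter_not s (fun a => φ a ∈ s),
    ← Finset.sum_filter_add_sum_filter_not (s.filter fun a => φ a ∈ s) P, Finset.filter_filter,
    Finset.filter_filter, Finset.sum_add_distrib]
  congr 2
  refine Finset.sum_nbij' φ φ (fun a ha => ?_) (fun a ha => ?_) (fun a _ => hφ a) (fun a _ => hφ a)
    (fun a _ => by rw [hφ a])
  all_goals
    simp only [Finset.mem_filter, hφ a, hP] at ha ⊢
    tauto

section HeckeModule

variable {M : Type} [AddCommGroup M] [Module k M] {q : k} {T : Fin N → Module.End k M}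

lemma IsHeckeRep.satisfiesBraidRelations (hT : IsHeckeRep q T) : SatisfiesBraidRelations T :=
  ⟨hT.1, hT.2.1⟩

lemma IsHeckeRep.range_le_ker (hT : IsHeckeRep q T) (i : Fin N) :
    LinearMap.range (T i + 1) ≤ LinearMap.ker (T i - q • 1) :=
  LinearMap.range_le_ker_iff.2 (hT.2.2 i)

lemma exists_T_mul_Tperm_eq_of_not_isDistL (hT : SatisfiesBraidRelations T) {B : Set (Fin N)}
    {σ : Equiv.Perm (Fin (N + 1))} {j : Fin N} (hσ : IsDistL B σ) (h : ¬IsDistL B (tau j * σ)) :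
    ∃ i ∈ B, T j * Tperm T σ = Tperm T σ * T i := by
  obtain ⟨i, hi, heq⟩ := exists_tau_mul_eq_mul_tau hσ h
  have hlen : len (σ * tau i) = len σ + 1 := len_mul_tau_of_lt (isDistL_iff.1 hσ i hi)
  exact ⟨i, hi, by rw [← Tperm_tau_mul hT (heq ▸ hlen), heq, Tperm_mul_tau hT hlen]⟩

lemma exists_Tperm_mul_T_eq_of_not_isDistR (hT : SatisfiesBraidRelations T) {B : Set (Fin N)}
    {σ : Equiv.Perm (Fin (N + 1))} {j : Fin N} (hσ : IsDistR B σ) (h : ¬IsDistR B (σ * tau j)) :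
    ∃ i ∈ B, Tperm T σ * T j = T i * Tperm T σ := by
  rw [isDistR_iff_isDistL_inv] at hσ h
  rw [mul_inv_rev, tau_inv] at h
  obtain ⟨i, hi, heq⟩ := exists_tau_mul_eq_mul_tau hσ h
  have heq' : σ * tau j = tau i * σ := by simpa using congrArg (·⁻¹) heq
  have hlen : len (tau i * σ) = len σ + 1 := len_tau_mul_of_lt (isDistL_iff.1 hσ i hi)
  exact ⟨i, hi, by rw [← Tperm_mul_tau hT (heq' ▸ hlen), heq', Tperm_tau_mul hT hlen]⟩

variable {U : Fin N → Submodule k M}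

lemma range_add_one_le (hT : IsHeckeRep q T)
    (hU : (∀ i, U i = LinearMap.ker (T i - q • 1)) ∨ (∀ i, U i = LinearMap.range (T i + 1)))
    (i : Fin N) : LinearMap.range (T i + 1) ≤ U i := by
  rcases hU with hU | hU
  · exact hU i ▸ hT.range_le_ker i
  · exact (hU i).ge

lemma le_ker_sub_smul_one (hT : IsHeckeRep q T)
    (hU : (∀ i, U i = LinearMap.ker (T i - q • 1)) ∨ (∀ i, U i = LinearMap.range (T i + 1)))
    (i : Fin N) : U i ≤ LinearMap.ker (T i - q • 1) := by
  rcases hU with hU | hU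
  · exact (hU i).le
  · exact hU i ▸ hT.range_le_ker i

lemma apply_mem_of_T_mul_eq_mul_T
    (hU : (∀ i, U i = LinearMap.ker (T i - q • 1)) ∨ (∀ i, U i = LinearMap.range (T i + 1)))
    {X : Module.End k M} {i j : Fin N} (h : T j * X = X * T i) {v : M} (hv : v ∈ U i) :
    X v ∈ U j := by
  rcases hU with hU | hU <;> rw [hU] at hv ⊢
  · have hX : (T j - q • 1) * X = X * (T i - q • 1) := by
      rw [sub_mul, mul_sub, h, smul_mul_assoc, mul_smul_comm, one_mul, mul_one]
    rw [LinearMap.mem_ker] at hv ⊢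
    rw [← Module.End.mul_apply, hX, Module.End.mul_apply, hv, map_zero]
  · have hX : (T j + 1) * X = X * (T i + 1) := by rw [add_mul, mul_add, h, one_mul, mul_one]
    obtain ⟨w, rfl⟩ := hv
    exact ⟨X w, by rw [← Module.End.mul_apply, hX, Module.End.mul_apply]⟩

lemma sum_Tperm_apply_mem (hT : IsHeckeRep q T)
    (hU : (∀ i, U i = LinearMap.ker (T i - q • 1)) ∨ (∀ i, U i = LinearMap.range (T i + 1)))
    {Bl Bm : Set (Fin N)} {j : Fin N} (hj : j ∈ Bm) {v : M} (hv : ∀ i ∈ Bl, v ∈ U i) :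
    (∑ σ ∈ Finset.univ.filter fun σ => σ ∈ youngSubgroup Bm ∧ IsDistL Bl σ, Tperm T σ) v ∈ U j := by
  have hbraid := hT.satisfiesBraidRelations
  rw [sum_eq_sum_pairs_add_sum_unpaired _ (φ := (tau j * ·)) (fun σ => by simp [← mul_assoc])
    (P := fun σ => σ⁻¹ j.castSucc < σ⁻¹ j.succ) (fun σ => inv_tau_mul_apply_castSucc_lt_iff σ j)]
  simp only [LinearMap.add_apply, LinearMap.sum_apply]
  refine add_mem (Submodule.sum_mem _ fun σ hσ => ?_) (Submodule.sum_mem _ fun σ hσ => ?_)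
  · simp only [Finset.mem_filter] at hσ
    rw [Tperm_tau_mul hbraid (len_tau_mul_of_lt hσ.2.2)]
    exact range_add_one_le hT hU j ⟨Tperm T σ v, by simp [add_comm]⟩
  · simp only [Finset.mem_filter, Finset.mem_univ, true_and, not_and] at hσ
    obtain ⟨i, hi, hcomm⟩ := exists_T_mul_Tperm_eq_of_not_isDistL hbraid hσ.1.2
      (hσ.2 (mul_mem (tau_mem_youngSubgroup hj) hσ.1.1))
    exact apply_mem_of_T_mul_eq_mul_T hU hcomm (hv i hi)

lemma sum_signed_Tperm_apply_mem (hT : IsHeckeRep q T)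
    (hU : (∀ i, U i = LinearMap.ker (T i - q • 1)) ∨ (∀ i, U i = LinearMap.range (T i + 1)))
    {Bl Bm : Set (Fin N)} {j : Fin N} (hj : j ∈ Bm) {m : ℕ}
    (hm : ∀ σ ∈ youngSubgroup Bm, IsDistR Bl σ → len σ ≤ m) {v : M} (hv : v ∈ U j) :
    (∑ σ ∈ Finset.univ.filter fun σ => σ ∈ youngSubgroup Bm ∧ IsDistR Bl σ,
      ((-1 : k) ^ len σ * q ^ (m - len σ)) • Tperm T σ) v ∈ ⨆ i ∈ Bl, U i := by
  have hbraid := hT.satisfiesBraidRelations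
  have hTj : T j v = q • v := by
    simpa [sub_eq_zero] using le_ker_sub_smul_one hT hU j hv
  rw [sum_eq_sum_pairs_add_sum_unpaired _ (φ := (· * tau j)) (fun σ => by simp [mul_assoc])
    (P := fun σ => σ j.castSucc < σ j.succ) (fun σ => mul_tau_apply_castSucc_lt_iff σ j)]
  simp only [LinearMap.add_apply, LinearMap.sum_apply]
  refine add_mem (Submodule.sum_mem _ fun σ hσ => ?_) (Submodule.sum_mem _ fun σ hσ => ?_)
  · simp only [Finset.mem_filter, Finset.mem_univ, true_and] at hσ
    have hlen := len_mul_tau_of_lt hσ.2.2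
    have hle : len σ + 1 ≤ m := hlen ▸ hm _ hσ.2.1.1 hσ.2.1.2
    have hcoef : (-1 : k) ^ len σ * q ^ (m - len σ) +
        (-1) ^ (len σ + 1) * q ^ (m - (len σ + 1)) * q = 0 := by
      rw [show m - len σ = m - (len σ + 1) + 1 by omega]
      ring
    rw [Tperm_mul_tau hbraid hlen, hlen]
    simp only [LinearMap.smul_apply, Module.End.mul_apply, hTj, map_smul, smul_smul, ← add_smul,
      hcoef, zero_smul]
    exact zero_mem _
  · simp only [Finset.mem_filter, Finset.mem_univ, true_and, not_and] at hσ
    obtain ⟨i, hi, hcomm⟩ := exists_Tperm_mul_T_eq_of_not_isDistR hbraid hσ.1.2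
      (hσ.2 (mul_mem hσ.1.1 (tau_mem_youngSubgroup hj)))
    exact Submodule.smul_mem _ _ (Submodule.mem_iSup_of_mem i (Submodule.mem_iSup_of_mem hi
      (apply_mem_of_T_mul_eq_mul_T hU hcomm.symm hv)))

end HeckeModule

theorem hecke_shift_operators_general {M : Type} [AddCommGroup M] [Module k M]
    (q : k) (T : Fin N → Module.End k M) (hT : IsHeckeRep q T)
    (Bl Bm : Set (Fin N))
    (U : Fin N → Submodule k M)
    (hU : (∀ i, U i = LinearMap.ker (T i - q • 1)) ∨
          (∀ i, U i = LinearMap.range (T i + 1)))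
    (x y : Module.End k M) (m : ℕ)
    (hm : m = sSup {r | ∃ σ, σ ∈ youngSubgroup Bm ∧ IsDistR Bl σ ∧ len σ = r})
    (hx : x = ∑ σ : Equiv.Perm (Fin (N + 1)),
      if σ ∈ youngSubgroup Bm ∧ IsDistL Bl σ then Tperm T σ else 0)
    (hy : y = ∑ σ : Equiv.Perm (Fin (N + 1)),
      if σ ∈ youngSubgroup Bm ∧ IsDistR Bl σ then
        ((-1 : k) ^ len σ * q ^ (m - len σ)) • Tperm T σ else 0) :
    (∀ v ∈ ⨅ (j : Fin N) (_ : j ∈ Bl), U j, x v ∈ ⨅ (j : Fin N) (_ : j ∈ Bm), U j) ∧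
    (∀ v ∈ ⨆ (j : Fin N) (_ : j ∈ Bm), U j, y v ∈ ⨆ (j : Fin N) (_ : j ∈ Bl), U j) := by
  rw [← Finset.sum_filter] at hx hy
  subst hx hy
  refine ⟨fun v hv => ?_, fun v hv => ?_⟩
  · simp only [Submodule.mem_iInf] at hv ⊢
    exact fun j hj => sum_Tperm_apply_mem hT hU hj hv
  · have hbdd : BddAbove {r | ∃ σ, σ ∈ youngSubgroup Bm ∧ IsDistR Bl σ ∧ len σ = r} :=
      (Set.finite_range len).subset (by rintro _ ⟨σ, -, -, rfl⟩; exact ⟨σ, rfl⟩) |>.bddAbove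
    have hle (σ) (h₁ : σ ∈ youngSubgroup Bm) (h₂ : IsDistR Bl σ) : len σ ≤ m :=
      hm ▸ le_csSup hbdd ⟨σ, h₁, h₂, rfl⟩
    refine (iSup₂_le fun j hj w hw => ?_ : (⨆ j ∈ Bm, U j) ≤ (⨆ i ∈ Bl, U i).comap _) hv
    exact sum_signed_Tperm_apply_mem hT hU hj hle hw

/-- for Young subgroups `S_λ ⊆ S_μ`, a Hecke module `M` with
`U_j = Ker(T_j - q)` (or uniformly `U_j = Im(T_j + 1)`),
`Υ(λ) = ⋂_{τ_j ∈ B_λ} U_j`, `Σ(λ) = Σ_{τ_j ∈ B_λ} U_j` (and similarly for `μ`),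
and the elements `x = Σ_{σ ∈ D(S_μ/S_λ)} T_σ` and
`y = Σ_{σ ∈ D(S_λ\S_μ)} (-1)^{ℓ(σ)} q^{m-ℓ(σ)} T_σ`
(`m` the maximal length of elements of `D(S_λ\S_μ)`), one has
`x·Υ(λ) ⊆ Υ(μ)` and `y·Σ(μ) ⊆ Σ(λ)`. -/
theorem hecke_shift_operators {M : Type} [AddCommGroup M] [Module k M]
    (q : k) (T : Fin N → Module.End k M) (hT : IsHeckeRep q T)
    (Bl Bm : Set (Fin N)) (hBB : Bl ⊆ Bm)
    (U : Fin N → Submodule k M)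
    (hU : (∀ i, U i = LinearMap.ker (T i - q • 1)) ∨
          (∀ i, U i = LinearMap.range (T i + 1)))
    (x y : Module.End k M) (m : ℕ)
    (hm : m = sSup {r | ∃ σ, σ ∈ youngSubgroup Bm ∧ IsDistR Bl σ ∧ len σ = r})
    (hx : x = ∑ σ : Equiv.Perm (Fin (N + 1)),
      if σ ∈ youngSubgroup Bm ∧ IsDistL Bl σ then Tperm T σ else 0)
    (hy : y = ∑ σ : Equiv.Perm (Fin (N + 1)),
      if σ ∈ youngSubgroup Bm ∧ IsDistR Bl σ then
        ((-1 : k) ^ len σ * q ^ (m - len σ)) • Tperm T σ else 0) :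
    (∀ v ∈ ⨅ (j : Fin N) (_ : j ∈ Bl), U j, x v ∈ ⨅ (j : Fin N) (_ : j ∈ Bm), U j) ∧
    (∀ v ∈ ⨆ (j : Fin N) (_ : j ∈ Bm), U j, y v ∈ ⨆ (j : Fin N) (_ : j ∈ Bl), U j) :=
  hecke_shift_operators_general q T hT Bl Bm U hU x y m hm hx hy
end
end
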